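/- Let G = (V, E) be a quasi-acyclic 2-path-bounded oriented graph without loops, multiple edges and triangles, and let D = (G, l) be a diagram over a monoid M. Then D is commutative if and only if for any two paths p₁, p₂ in G with the same origin and the same tail and satisfying |p₁| = |p₂| = 2, the equality l(p₁) = l(p₂) holds. -/

import Mathlib

/-- An oriented graph: finite nonempty sets of vertices and edges with
origin and tail maps. -/
structure OrientedGraph where
  V : Type
  E : Type
  [fintypeV : Fintype V]
  [fintypeE : Fintype E]
  [nonemptyV : Nonempty V]
  [nonemptyE : Nonempty E]
  o : E → V
  t : E → V

attribute [instance] OrientedGraph.fintypeV OrientedGraph.fintypeE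
  OrientedGraph.nonemptyV OrientedGraph.nonemptyE

namespace OrientedGraph

variable (G : OrientedGraph)

/-- `G.IsPath p u v` : the edge sequence `p` is a path from `u` to `v`
(consecutive edges are composable; paths of length 0 at any vertex are allowed). -/
def IsPath (p : List G.E) (u v : G.V) : Prop :=
  List.Chain' (fun e f => G.t e = G.o f) p ∧
  ((p = [] ∧ u = v) ∨
    ∃ h : p ≠ [], u = G.o (p.head h) ∧ v = G.t (p.getLast h))

/-- The label of an edge sequence: the product of the labels of its edges
(the empty sequence maps to `1`). -/
def labelProd {M : Type} [Monoid M] (l : G.E → M) (s : List G.E) : M :=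
  (s.map l).prod

/-- The diagram `(G, l)` is commutative: any two paths with the same origin and
the same tail have equal labels. -/
def IsCommutative {M : Type} [Monoid M] (l : G.E → M) : Prop :=
  ∀ (u v : G.V) (p₁ p₂ : List G.E),
    G.IsPath p₁ u v → G.IsPath p₂ u v → G.labelProd l p₁ = G.labelProd l p₂

/-- A complete system of relations for `G`: for every monoid `M` and every
labeling `l : E → M`, the diagram `(G, l)` is commutative iff all relations hold. -/
def IsComplete (R : Finset (List G.E × List G.E)) : Prop :=
  ∀ (M : Type) [Monoid M], ∀ l : G.E → M,
    G.IsCommutative l ↔ ∀ r ∈ R, G.labelProd l r.1 = G.labelProd l r.2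

/-- A minimal complete system of relations: no proper subset is complete. -/
def IsMinimalComplete (R : Finset (List G.E × List G.E)) : Prop :=
  G.IsComplete R ∧ ∀ R' : Finset (List G.E × List G.E), R' ⊂ R → ¬ G.IsComplete R'

/-- The commutativity rank `η(G)`: the minimal cardinality of a complete
system of relations for `G`. -/
noncomputable def eta : ℕ :=
  sInf {n : ℕ | ∃ R : Finset (List G.E × List G.E), G.IsComplete R ∧ R.card = n}

/-- `S'` is obtained from `S` by one multiplication. -/
def MulStep (S S' : Set (List G.E)) : Prop :=
  ∃ s ∈ S, ∃ s' ∈ S, S' = S ∪ {s ++ s'}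

/-- `G.mCost S S'` : the minimal number of multiplications needed to obtain `S'`
from `S` (`⊤` if impossible). -/
noncomputable def mCost (S S' : Set (List G.E)) : ℕ∞ :=
  sInf {k : ℕ∞ | ∃ n : ℕ, k = n ∧ ∃ f : ℕ → Set (List G.E),
    f 0 = S ∧ f n = S' ∧ ∀ i < n, G.MulStep (f i) (f (i + 1))}

/-- `S_R`: the set of all edge sequences appearing in the relations of `R`. -/
def relSet (R : Finset (List G.E × List G.E)) : Set (List G.E) :=
  {s | ∃ r ∈ R, s = r.1 ∨ s = r.2}

/-- `ℰ`: the empty sequence together with all one-edge sequences. -/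
def baseSet : Set (List G.E) :=
  {s | s = [] ∨ ∃ e : G.E, s = [e]}

/-- `m(R)`: the minimal number of multiplications needed to build all sequences
appearing in `R`, starting from `ℰ`. -/
noncomputable def mRel (R : Finset (List G.E × List G.E)) : ℕ∞ :=
  sInf {k : ℕ∞ | ∃ S : Set (List G.E), G.relSet R ⊆ S ∧ k = G.mCost G.baseSet S}

/-- The multiplication rank `ν(G)`. -/
noncomputable def nu : ℕ∞ :=
  sInf {k : ℕ∞ | ∃ R : Finset (List G.E × List G.E), G.IsComplete R ∧ k = G.mRel R}

/-- A 4-tuple of edges `(a, b, c, d)` forms a rhomboid. -/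
def IsRhomboid (r : G.E × G.E × G.E × G.E) : Prop :=
  G.o r.1 = G.o r.2.2.1 ∧ G.t r.2.1 = G.t r.2.2.2 ∧
  G.t r.1 = G.o r.2.1 ∧ G.t r.2.2.1 = G.o r.2.2.2 ∧
  G.o r.1 ≠ G.t r.1 ∧ G.o r.1 ≠ G.o r.2.2.2 ∧ G.o r.1 ≠ G.t r.2.2.2 ∧
  G.t r.1 ≠ G.o r.2.2.2 ∧ G.t r.1 ≠ G.t r.2.2.2 ∧ G.o r.2.2.2 ≠ G.t r.2.2.2

/-- Two rhomboids `(a, b, c, d)` and `(a', b', c', d')` are disjoint. -/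
def RhDisjoint (r r' : G.E × G.E × G.E × G.E) : Prop :=
  (r.1 ≠ r'.1 ∨ r.2.1 ≠ r'.2.1) ∧
  (r.1 ≠ r'.2.2.1 ∨ r.2.1 ≠ r'.2.2.2) ∧
  (r.2.2.1 ≠ r'.2.2.1 ∨ r.2.2.2 ≠ r'.2.2.2) ∧
  (r.2.2.1 ≠ r'.1 ∨ r.2.2.2 ≠ r'.2.1)

/-- `𝔯𝔥(G)`: the maximal cardinality of a family of pairwise disjoint rhomboids in `G`. -/
noncomputable def rhNum : ℕ :=
  sSup {n : ℕ | ∃ F : Finset (G.E × G.E × G.E × G.E),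
    (∀ r ∈ F, G.IsRhomboid r) ∧
    (∀ r ∈ F, ∀ r' ∈ F, r ≠ r' → G.RhDisjoint r r') ∧ F.card = n}

/-- `𝔏(G)`: the number of loops of `G`. -/
noncomputable def loopCount : ℕ :=
  Nat.card {e : G.E // G.o e = G.t e}

/-- `G` is quasi-acyclic: no directed cycle visiting two or more distinct vertices. -/
def QuasiAcyclic : Prop :=
  ∀ u v : G.V, u ≠ v →
    ∀ p q : List G.E, G.IsPath p u v → G.IsPath q v u → False

/-- `G` is 2-path-bounded: every oriented path avoiding loop edges has length at most 2. -/
def TwoPathBounded : Prop :=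
  ∀ (p : List G.E) (u v : G.V), G.IsPath p u v →
    (∀ e ∈ p, G.o e ≠ G.t e) → p.length ≤ 2

/-- `G` has a pair of multiple edges. -/
def HasMultipleEdges : Prop :=
  ∃ e e' : G.E, e ≠ e' ∧ G.t e = G.t e' ∧ G.o e = G.o e' ∧ G.t e ≠ G.o e

/-- `G` has a triangle. -/
def HasTriangle : Prop :=
  ∃ a b c : G.E, G.o a = G.o b ∧ G.t b = G.o c ∧ G.t c = G.t a ∧
    G.o a ≠ G.t a ∧ G.o b ≠ G.t b ∧ G.o c ≠ G.t c

/-- `G` has no loops. -/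
def NoLoops : Prop := ∀ e : G.E, G.o e ≠ G.t e

/-- Every edge occurring on either side of the relation `r` is a loop. -/
def AllLoops (r : List G.E × List G.E) : Prop :=
  (∀ e ∈ r.1, G.o e = G.t e) ∧ (∀ e ∈ r.2, G.o e = G.t e)

/-- Both sides of the relation `r` contain at least one non-loop edge. -/
def BothSidesNonLoop (r : List G.E × List G.E) : Prop :=
  (∃ e ∈ r.1, G.o e ≠ G.t e) ∧ (∃ e ∈ r.2, G.o e ≠ G.t e)

end OrientedGraph

/-- The triploid `T(n₁, n₂, n₃, n₀, e)`. -/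
def Triploid (n₁ n₂ n₃ n₀ e : ℕ) (hn₁ : 0 < n₁) (he : n₂ * (n₁ + n₃) ≤ e)
    (he₀ : 0 < e) : OrientedGraph where
  V := Fin n₀ ⊕ Fin n₁ ⊕ Fin n₂ ⊕ Fin n₃
  E := (Fin n₁ × Fin n₂) ⊕ (Fin n₂ × Fin n₃) ⊕ Fin (e - n₂ * (n₁ + n₃))
  nonemptyV := ⟨Sum.inr (Sum.inl ⟨0, hn₁⟩)⟩
  nonemptyE := by
    by_cases h : n₂ * (n₁ + n₃) < e
    · exact ⟨Sum.inr (Sum.inr ⟨0, by omega⟩)⟩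
    · have h2 : 0 < n₂ := by
        rcases Nat.eq_zero_or_pos n₂ with h0 | h0
        · exfalso; subst h0; simp at h; omega
        · exact h0
      exact ⟨Sum.inl (⟨0, hn₁⟩, ⟨0, h2⟩)⟩
  o := Sum.elim (fun p => Sum.inr (Sum.inl p.1))
        (Sum.elim (fun p => Sum.inr (Sum.inr (Sum.inl p.1)))
          (fun _ => Sum.inr (Sum.inl ⟨0, hn₁⟩)))
  t := Sum.elim (fun p => Sum.inr (Sum.inr (Sum.inl p.2)))
        (Sum.elim (fun p => Sum.inr (Sum.inr (Sum.inr p.2)))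
          (fun _ => Sum.inr (Sum.inl ⟨0, hn₁⟩)))


/-!
Without loops and directed cycles, the only path from a vertex to itself is the empty one, and by
2-path-boundedness every other path consists of one or two edges. Two parallel single edges
would be multiple edges and a single edge parallel to a path of length two would close a
triangle, so two paths with the same ends either coincide or both have length two.
-/

namespace OrientedGraph

variable (G : OrientedGraph)

theorem isPath_nil_iff {u v : G.V} : G.IsPath [] u v ↔ u = v := by
  constructor
  · rintro ⟨-, h | ⟨h, -⟩⟩
    · exact h.2
    · exact absurd rfl h
  · rintro rfl
    exact ⟨List.isChain_nil, Or.inl ⟨rfl, rfl⟩⟩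

theorem isPath_cons_iff {e : G.E} {p : List G.E} {u v : G.V} :
    G.IsPath (e :: p) u v ↔ u = G.o e ∧ G.IsPath p (G.t e) v := by
  constructor
  · rintro ⟨hc, h | ⟨hne, hu, hv⟩⟩
    · simp at h
    refine ⟨hu, ?_⟩
    rcases p with _ | ⟨f, q⟩
    · exact (G.isPath_nil_iff).2 (by simpa using hv.symm)
    · obtain ⟨hef, hq⟩ := List.isChain_cons_cons.mp hc
      exact ⟨hq, Or.inr ⟨List.cons_ne_nil f q, hef, by simpa using hv⟩⟩
  · rintro ⟨rfl, hc, h | ⟨hne, hf, hv⟩⟩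
    · obtain ⟨rfl, rfl⟩ := h
      exact ⟨List.isChain_singleton e, Or.inr ⟨List.cons_ne_nil e [], rfl, rfl⟩⟩
    · obtain ⟨f, q, rfl⟩ := List.exists_cons_of_ne_nil hne
      exact ⟨List.isChain_cons_cons.mpr ⟨hf, hc⟩,
        Or.inr ⟨List.cons_ne_nil e _, rfl, by simpa using hv⟩⟩

theorem isPath_singleton_iff {e : G.E} {u v : G.V} :
    G.IsPath [e] u v ↔ u = G.o e ∧ v = G.t e := by
  rw [isPath_cons_iff, isPath_nil_iff, eq_comm (a := G.t e)]

theorem isPath_pair_iff {a b : G.E} {u v : G.V} :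
    G.IsPath [a, b] u v ↔ u = G.o a ∧ G.t a = G.o b ∧ v = G.t b := by
  rw [isPath_cons_iff, isPath_singleton_iff]

variable {G}

theorem eq_nil_of_isPath_self (hnl : G.NoLoops) (hqa : G.QuasiAcyclic) {p : List G.E} {u : G.V}
    (h : G.IsPath p u u) : p = [] := by
  rcases p with _ | ⟨e, q⟩
  · rfl
  · obtain ⟨rfl, hq⟩ := (G.isPath_cons_iff).1 h
    exact (hqa _ _ (hnl e) [e] q ((G.isPath_singleton_iff).2 ⟨rfl, rfl⟩) hq).elim

theorem eq_singleton_or_eq_pair_of_isPath (hnl : G.NoLoops) (hpb : G.TwoPathBounded)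
    {p : List G.E} {u v : G.V} (h : G.IsPath p u v) (huv : u ≠ v) :
    (∃ a, p = [a]) ∨ ∃ a b, p = [a, b] := by
  have hlen := hpb p u v h fun e _ => hnl e
  match p, hlen with
  | [], _ => exact (huv ((G.isPath_nil_iff).1 h)).elim
  | [a], _ => exact Or.inl ⟨a, rfl⟩
  | [a, b], _ => exact Or.inr ⟨a, b, rfl⟩

theorem hasMultipleEdges_of_isPath_singleton {a b : G.E} {u v : G.V} (hab : a ≠ b)
    (huv : u ≠ v) (ha : G.IsPath [a] u v) (hb : G.IsPath [b] u v) : G.HasMultipleEdges := by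
  rw [isPath_singleton_iff] at ha hb
  obtain ⟨rfl, rfl⟩ := ha
  exact ⟨a, b, hab, hb.2, hb.1, Ne.symm huv⟩

theorem hasTriangle_of_isPath_singleton_of_isPath_pair (hnl : G.NoLoops) {a b c : G.E}
    {u v : G.V} (ha : G.IsPath [a] u v) (hbc : G.IsPath [b, c] u v) : G.HasTriangle := by
  rw [isPath_singleton_iff] at ha
  rw [isPath_pair_iff] at hbc
  obtain ⟨rfl, rfl⟩ := ha
  exact ⟨a, b, c, hbc.1, hbc.2.1, hbc.2.2.symm, hnl a, hnl b, hnl c⟩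

end OrientedGraph

open OrientedGraph in
/-- Theorem: for a quasi-acyclic, 2-path-bounded graph without loops, multiple edges
and triangles, a diagram is commutative iff all pairs of length-2 paths with the same
endpoints have equal labels. -/
theorem commutative_iff_length_two_paths (G : OrientedGraph) (hnl : G.NoLoops) (hqa : G.QuasiAcyclic)
    (hpb : G.TwoPathBounded) (hme : ¬ G.HasMultipleEdges) (htr : ¬ G.HasTriangle)
    (M : Type) [Monoid M] (l : G.E → M) :
    G.IsCommutative l ↔
      ∀ (u v : G.V) (p₁ p₂ : List G.E), G.IsPath p₁ u v → G.IsPath p₂ u v →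
        p₁.length = 2 → p₂.length = 2 → G.labelProd l p₁ = G.labelProd l p₂ := by
  refine ⟨fun h u v p₁ p₂ h₁ h₂ _ _ => h u v p₁ p₂ h₁ h₂, fun H u v p₁ p₂ h₁ h₂ => ?_⟩
  by_cases huv : u = v
  · subst huv
    rw [eq_nil_of_isPath_self hnl hqa h₁, eq_nil_of_isPath_self hnl hqa h₂]
  rcases eq_singleton_or_eq_pair_of_isPath hnl hpb h₁ huv with ⟨a, rfl⟩ | ⟨a, b, rfl⟩ <;>
    rcases eq_singleton_or_eq_pair_of_isPath hnl hpb h₂ huv with ⟨c, rfl⟩ | ⟨c, d, rfl⟩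
  · obtain rfl : a = c := by
      by_contra hac
      exact hme (hasMultipleEdges_of_isPath_singleton hac huv h₁ h₂)
    rfl
  · exact (htr (hasTriangle_of_isPath_singleton_of_isPath_pair hnl h₁ h₂)).elim
  · exact (htr (hasTriangle_of_isPath_singleton_of_isPath_pair hnl h₂ h₁)).elim
  · exact H u v _ _ h₁ h₂ rfl rfl
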